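/- Suppose A satisfies the RIP of order s with constant δ. Then for all u, v ∈ ℝ^n with disjoint supports satisfying |supp(u)| + |supp(v)| ≤ s, one has |⟨Au, Av⟩| ≤ δ‖u‖‖v‖. In particular, for disjoint sets S, T ⊆ {1,…,n} with |S ∪ T| ≤ s, the operator norm of A_Sᵀ A_T is at most δ, where A_S, A_T are the submatrices of columns of A indexed by S and T. -/
import Mathlib


open Finset Matrix

noncomputable def nrm {d : ℕ} (x : Fin d → ℝ) : ℝ := Real.sqrt (∑ i, (x i)^2)

noncomputable def supp {d : ℕ} (x : Fin d → ℝ) : Finset (Fin d) := Finset.univ.filter (fun i => x i ≠ 0)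

def restr {d : ℕ} (x : Fin d → ℝ) (I : Finset (Fin d)) : Fin d → ℝ := fun i => if i ∈ I then x i else 0

noncomputable def dotp {d : ℕ} (x y : Fin d → ℝ) : ℝ := ∑ i, x i * y i

def RIP {m n : ℕ} (A : Matrix (Fin m) (Fin n) ℝ) (s : ℕ) (δ : ℝ) : Prop :=
  0 ≤ δ ∧ δ < 1 ∧ ∀ x : Fin n → ℝ, (supp x).card ≤ s →
    (1 - δ) * (nrm x)^2 ≤ (nrm (A.mulVec x))^2 ∧ (nrm (A.mulVec x))^2 ≤ (1 + δ) * (nrm x)^2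

def lsSol {m n : ℕ} (A : Matrix (Fin m) (Fin n) ℝ) (b : Fin m → ℝ) (I : Finset (Fin n)) (x : Fin n → ℝ) : Prop :=
  supp x ⊆ I ∧ ∀ i ∈ I, Aᵀ.mulVec (A.mulVec x - b) i = 0

noncomputable def obj {m n : ℕ} (A : Matrix (Fin m) (Fin n) ℝ) (b : Fin m → ℝ) (x : Fin n → ℝ) : ℝ :=
  (1/2) * (nrm (A.mulVec x - b))^2

lemma nrm_sq {d : ℕ} (x : Fin d → ℝ) : nrm x ^ 2 = ∑ i, (x i)^2 := by
  rw [nrm, Real.sq_sqrt]; positivity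

lemma nrm_nonneg {d : ℕ} (x : Fin d → ℝ) : 0 ≤ nrm x := Real.sqrt_nonneg _

lemma eq_zero_of_nrm {d : ℕ} (x : Fin d → ℝ) (h : nrm x = 0) : x = 0 := by
  have h1 : ∑ i, (x i)^2 = 0 := by
    have h2 : (0:ℝ) ≤ ∑ i, (x i)^2 := by positivity
    have h3 := Real.sqrt_eq_zero'.mp h
    linarith
  funext i
  have := (Finset.sum_eq_zero_iff_of_nonneg (fun i _ => sq_nonneg (x i))).mp h1 i (mem_univ i)
  exact pow_eq_zero_iff (by norm_num) |>.mp this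

lemma mul_eq_zero_of_disj {d : ℕ} {u v : Fin d → ℝ} (h : Disjoint (supp u) (supp v)) (i : Fin d) :
    u i * v i = 0 := by
  by_cases hu : u i = 0
  · simp [hu]
  · have hv : v i = 0 := by
      by_contra hv
      have hiu : i ∈ supp u := by simp [supp, hu]
      have hiv : i ∈ supp v := by simp [supp, hv]
      exact Finset.disjoint_left.mp h hiu hiv
    simp [hv]

lemma supp_comb {d : ℕ} (a b : ℝ) (u v : Fin d → ℝ) :
    supp (a • u + b • v) ⊆ supp u ∪ supp v := by
  intro i hi
  simp only [supp, mem_filter, mem_univ, true_and, mem_union] at *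
  by_contra h
  push_neg at h
  exact hi (by simp [h.1, h.2])

lemma nrm_comb {d : ℕ} (a b : ℝ) {u v : Fin d → ℝ} (h : Disjoint (supp u) (supp v)) :
    nrm (a • u + b • v) ^ 2 = a^2 * nrm u ^ 2 + b^2 * nrm v ^ 2 := by
  rw [nrm_sq, nrm_sq, nrm_sq, Finset.mul_sum, Finset.mul_sum, ← Finset.sum_add_distrib]
  apply Finset.sum_congr rfl
  intro i _
  simp only [Pi.add_apply, Pi.smul_apply, smul_eq_mul]
  have h2 : (a * u i + b * v i)^2 = a^2*(u i)^2 + b^2*(v i)^2 + 2*(a*b)*(u i * v i) := by ring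
  rw [h2, mul_eq_zero_of_disj h i]
  ring

lemma dotp_smul {d : ℕ} (a b : ℝ) (x y : Fin d → ℝ) :
    dotp (a • x) (b • y) = a * b * dotp x y := by
  simp only [dotp, Pi.smul_apply, smul_eq_mul, Finset.mul_sum]
  exact Finset.sum_congr rfl fun i _ => by ring

lemma polar {d : ℕ} (x y : Fin d → ℝ) :
    nrm (x + y) ^ 2 - nrm (x - y) ^ 2 = 4 * dotp x y := by
  rw [nrm_sq, nrm_sq, dotp, ← Finset.sum_sub_distrib, Finset.mul_sum]
  apply Finset.sum_congr rfl
  intro i _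
  simp only [Pi.add_apply, Pi.sub_apply]
  ring

theorem stmt2 {m n : ℕ} (A : Matrix (Fin m) (Fin n) ℝ) (s : ℕ) (δ : ℝ)
    (hRIP : RIP A s δ) :
    (∀ u v : Fin n → ℝ, Disjoint (supp u) (supp v) →
      (supp u).card + (supp v).card ≤ s →
      |dotp (A.mulVec u) (A.mulVec v)| ≤ δ * nrm u * nrm v) ∧
    (∀ S T : Finset (Fin n), Disjoint S T → (S ∪ T).card ≤ s →
      ∀ w : Fin n → ℝ, supp w ⊆ T →
        nrm (restr (Aᵀ.mulVec (A.mulVec w)) S) ≤ δ * nrm w) := by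
  obtain ⟨hδ0, hδ1, hR⟩ := hRIP
  have part1 : ∀ u v : Fin n → ℝ, Disjoint (supp u) (supp v) →
      (supp u).card + (supp v).card ≤ s →
      |dotp (A.mulVec u) (A.mulVec v)| ≤ δ * nrm u * nrm v := by
    intro u v hdisj hcard
    by_cases hu : nrm u = 0
    · have := eq_zero_of_nrm u hu
      subst this
      simp [dotp, Matrix.mulVec_zero, hu]
    by_cases hv : nrm v = 0
    · have := eq_zero_of_nrm v hv
      subst this
      simp [dotp, Matrix.mulVec_zero, hv]
    have hb : 0 < nrm u := lt_of_le_of_ne (nrm_nonneg u) (Ne.symm hu)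
    have ha : 0 < nrm v := lt_of_le_of_ne (nrm_nonneg v) (Ne.symm hv)
    set a := nrm v with ha'
    set b := nrm u with hb'
    -- p = a•u + b•v, q = a•u + (-b)•v
    have hcardp : ∀ c : ℝ, (supp (a • u + c • v)).card ≤ s := by
      intro c
      calc (supp (a • u + c • v)).card ≤ (supp u ∪ supp v).card :=
            Finset.card_le_card (supp_comb a c u v)
        _ ≤ (supp u).card + (supp v).card := Finset.card_union_le _ _
        _ ≤ s := hcard
    have hp := hR (a • u + b • v) (hcardp b)
    have hq := hR (a • u + (-b) • v) (hcardp (-b))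
    have hnp : nrm (a • u + b • v) ^ 2 = 2 * (a * b)^2 := by
      rw [nrm_comb a b hdisj]; ring
    have hnq : nrm (a • u + (-b) • v) ^ 2 = 2 * (a * b)^2 := by
      rw [nrm_comb a (-b) hdisj]; ring
    have hmv : ∀ c : ℝ, A.mulVec (a • u + c • v) = a • A.mulVec u + c • A.mulVec v := by
      intro c
      rw [Matrix.mulVec_add, Matrix.mulVec_smul, Matrix.mulVec_smul]
    have hpol : nrm (A.mulVec (a • u + b • v)) ^ 2 - nrm (A.mulVec (a • u + (-b) • v)) ^ 2
        = 4 * (a * b * dotp (A.mulVec u) (A.mulVec v)) := by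
      rw [hmv b, hmv (-b), ← dotp_smul a b]
      have : a • A.mulVec u + (-b) • A.mulVec v = a • A.mulVec u - b • A.mulVec v := by
        funext j; simp; ring
      rw [this]
      exact polar _ _
    rw [hnp] at hp
    rw [hnq] at hq
    have hab : 0 < a * b := mul_pos ha hb
    rw [abs_le]
    constructor
    · nlinarith [hp.1, hq.2, hpol, hab]
    · nlinarith [hp.2, hq.1, hpol, hab]
  refine ⟨part1, ?_⟩
  intro S T hST hcard w hw
  set y := restr (Aᵀ.mulVec (A.mulVec w)) S with hy
  have hys : supp y ⊆ S := by
    intro i hi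
    simp only [supp, mem_filter, mem_univ, true_and] at hi
    by_contra h
    exact hi (by simp [hy, restr, h])
  have hdisj : Disjoint (supp y) (supp w) := hST.mono hys hw
  have hcard2 : (supp y).card + (supp w).card ≤ s := by
    calc (supp y).card + (supp w).card ≤ S.card + T.card :=
          Nat.add_le_add (Finset.card_le_card hys) (Finset.card_le_card hw)
      _ = (S ∪ T).card := (Finset.card_union_of_disjoint hST).symm
      _ ≤ s := hcard
  have hkey : dotp (A.mulVec y) (A.mulVec w) = nrm y ^ 2 := by
    have h1 : dotp (A.mulVec y) (A.mulVec w) = ∑ i, y i * (Aᵀ.mulVec (A.mulVec w)) i := by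
      show (A.mulVec y) ⬝ᵥ (A.mulVec w) = y ⬝ᵥ (Aᵀ.mulVec (A.mulVec w))
      rw [Matrix.dotProduct_mulVec y, Matrix.vecMul_transpose]
    rw [h1, nrm_sq]
    apply Finset.sum_congr rfl
    intro i _
    by_cases h : i ∈ S
    · simp [hy, restr, h]; ring
    · simp [hy, restr, h]
  have hle := part1 y w hdisj hcard2
  rw [hkey] at hle
  have h2 : nrm y ^ 2 ≤ δ * nrm y * nrm w := le_trans (le_abs_self _) hle
  by_cases hy0 : nrm y = 0
  · rw [hy0]; exact mul_nonneg hδ0 (nrm_nonneg w)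
  · have hpos : 0 < nrm y := lt_of_le_of_ne (nrm_nonneg y) (Ne.symm hy0)
    nlinarith [h2, hpos]
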